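/- Let a ∈ ℝ⁴ with a ≠ 0, let {ε₁, ε₂, ε₃} be an orthonormal basis of a^⊥ with ε₁ = (−d,c,−b,a)/|a|, ε₂ = (−c,−d,a,b)/|a|, ε₃ = (−b,a,d,−c)/|a| where a = (a,b,c,d), and for R ∈ (0,1) define γ(s) = R(cos(s/R) ε₁ + sin(s/R) ε₂) + √(1−R²) ε₃. Then γ is a unit-speed curve on S³ satisfying γ'' + γ = q · (V(γ) ×_{S³} γ') with q = −√(1−R²)/(|a|R), where V(p) = a − ⟨a,p⟩p. -/

import Mathlib

def dot4 (u v : Fin 4 → ℝ) : ℝ := ∑ i, u i * v i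

def det4 (u v w p : Fin 4 → ℝ) : ℝ := (Matrix.of ![u, v, w, p]).det

/-!
For the quaternion `a = A + Bi + Cj + Dk`, the vectors `ε₁, ε₂, ε₃` are `a·k, a·j, a·i` divided by
`|a|`, so they form an orthonormal basis of `a^⊥`. In coordinates `x, y ∈ ℝ³` with respect to `ε`,
`det(a, x·ε, w, y·ε) = |a| ⟨(x × y)·ε, w⟩` with the cross product of `ℝ³`. Since `γ ⊥ a` we have
`V(γ) = a`, and `γ, γ', γ''` have the coordinates `(R cos, R sin, r)`, `(-sin, cos, 0)` and
`-R⁻¹ (cos, sin, 0)`, where `r = √(1 - R²)`; the equation becomes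
`(R - R⁻¹)(cos, sin, 0) + (0, 0, r) = -(r / R) (r cos, r sin, -R)`, which holds as `r² = 1 - R²`.
The field `X` is that cross product: both are tangent at `γ` and agree against every tangent vector.
-/

open Matrix

theorem dot4_eq_dotProduct (u v : Fin 4 → ℝ) : dot4 u v = u ⬝ᵥ v := rfl

/-- The spherical cross product `u ×_{S³} v` at `p`. -/
def sphCross (u v p : Fin 4 → ℝ) : Fin 4 → ℝ := fun i => det4 u v (Pi.single i 1) p

theorem det4_eq_sphCross_dotProduct (u v w p : Fin 4 → ℝ) :
    det4 u v w p = sphCross u v p ⬝ᵥ w := by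
  simp [det4, sphCross, det_succ_row_zero, Fin.sum_univ_succ, dotProduct, Fin.succAbove,
    Pi.single_apply]
  ring

theorem sphCross_dotProduct_base (u v p : Fin 4 → ℝ) : sphCross u v p ⬝ᵥ p = 0 := by
  rw [← det4_eq_sphCross_dotProduct]
  exact det_zero_of_row_eq (i := 2) (j := 3) (by decide) rfl

theorem eq_sphCross_of_dotProduct_eq {u v p X : Fin 4 → ℝ} (hXp : X ⬝ᵥ p = 0)
    (hX : ∀ w, w ⬝ᵥ p = 0 → X ⬝ᵥ w = det4 u v w p) : X = sphCross u v p := by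
  have hp : (X - sphCross u v p) ⬝ᵥ p = 0 := by
    rw [sub_dotProduct, hXp, sphCross_dotProduct_base, sub_zero]
  have hX' := hX _ hp
  rw [det4_eq_sphCross_dotProduct, ← sub_eq_zero, ← sub_dotProduct] at hX'
  exact sub_eq_zero.mp (dotProduct_self_eq_zero.mp hX')

section SmallCircle

variable {E : Type*} [NormedAddCommGroup E] [NormedSpace ℝ E] (e₁ e₂ e₃ : E) {R : ℝ} (r s : ℝ)

theorem hasDerivAt_smallCircle (hR : R ≠ 0) :
    HasDerivAt (fun t => R • (Real.cos (t / R) • e₁ + Real.sin (t / R) • e₂) + r • e₃)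
      (-Real.sin (s / R) • e₁ + Real.cos (s / R) • e₂) s := by
  have h := (hasDerivAt_id' s).div_const R
  refine ((((h.cos.smul_const e₁).add (h.sin.smul_const e₂)).const_smul R).add_const
    (r • e₃)).congr_deriv ?_
  match_scalars <;> field_simp

theorem hasDerivAt_smallCircle_tangent :
    HasDerivAt (fun t => -Real.sin (t / R) • e₁ + Real.cos (t / R) • e₂)
      (-R⁻¹ • (Real.cos (s / R) • e₁ + Real.sin (s / R) • e₂)) s := by
  have h := (hasDerivAt_id' s).div_const R
  refine ((h.sin.neg.smul_const e₁).add (h.cos.smul_const e₂)).congr_deriv ?_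
  module

end SmallCircle

section SmallCircleCoordinates

variable {R r : ℝ} (t : ℝ)

theorem smallCircle_coord_dotProduct_self (hr : r ^ 2 = 1 - R ^ 2) :
    ![R * Real.cos t, R * Real.sin t, r] ⬝ᵥ ![R * Real.cos t, R * Real.sin t, r] = 1 := by
  simp only [dotProduct, Fin.sum_univ_three, cons_val]
  linear_combination R ^ 2 * Real.cos_sq_add_sin_sq t + hr

theorem smallCircle_tangent_coord_dotProduct_self :
    ![-Real.sin t, Real.cos t, 0] ⬝ᵥ ![-Real.sin t, Real.cos t, 0] = 1 := by
  simp only [dotProduct, Fin.sum_univ_three, cons_val]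
  linear_combination Real.sin_sq_add_cos_sq t

theorem smallCircle_coord_equation (hR : R ≠ 0) (hr : r ^ 2 = 1 - R ^ 2) :
    ![-R⁻¹ * Real.cos t, -R⁻¹ * Real.sin t, 0] + ![R * Real.cos t, R * Real.sin t, r] =
      (-r / R) • (![-Real.sin t, Real.cos t, 0] ⨯₃ ![R * Real.cos t, R * Real.sin t, r]) := by
  simp only [cross_apply, vec3_add, smul_vec3, smul_eq_mul, cons_val]
  refine vec3_eq ?_ ?_ ?_ <;> field_simp
  · linear_combination Real.cos t * hr
  · linear_combination Real.sin t * hr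
  · linear_combination -r * Real.sin_sq_add_cos_sq t

end SmallCircleCoordinates

theorem vecMul_dotProduct_vecMul_of_mul_transpose_eq_one {m n : Type*} [Fintype m]
    [DecidableEq m] [Fintype n] {F : Matrix m n ℝ} (hF : F * Fᵀ = 1) (x y : m → ℝ) :
    x ᵥ* F ⬝ᵥ y ᵥ* F = x ⬝ᵥ y := by
  rw [← dotProduct_mulVec, ← mulVec_transpose, mulVec_mulVec, hF, one_mulVec]

theorem vecMul_of_vec3 {α : Type*} [NonUnitalNonAssocSemiring α] {n : Type*} (x y z : α)
    (e₁ e₂ e₃ : n → α) : ![x, y, z] ᵥ* of ![e₁, e₂, e₃] = x • e₁ + y • e₂ + z • e₃ := by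
  simp [add_assoc]

theorem sum_sq_pos_of_vec4_ne_zero {A B C D : ℝ} (h : ![A, B, C, D] ≠ 0) :
    0 < A ^ 2 + B ^ 2 + C ^ 2 + D ^ 2 := by
  simpa [dotProduct, Fin.sum_univ_four, sq, add_assoc] using dotProduct_self_star_pos_iff.mpr h

section PerpFrame

/-- The rows `ε₁, ε₂, ε₃`, with `n` standing for `|a|`. -/
noncomputable def perpFrame (A B C D n : ℝ) : Matrix (Fin 3) (Fin 4) ℝ :=
  of ![n⁻¹ • ![-D, C, -B, A], n⁻¹ • ![-C, -D, A, B], n⁻¹ • ![-B, A, D, -C]]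

variable {A B C D n : ℝ}

theorem perpFrame_mulVec : perpFrame A B C D n *ᵥ ![A, B, C, D] = 0 := by
  ext i
  fin_cases i <;> simp [perpFrame, mulVec, dotProduct, Fin.sum_univ_four] <;> ring

theorem perpFrame_mul_transpose (hn : n ^ 2 = A ^ 2 + B ^ 2 + C ^ 2 + D ^ 2) (hn0 : n ≠ 0) :
    perpFrame A B C D n * (perpFrame A B C D n)ᵀ = 1 := by
  ext i j
  fin_cases i <;> fin_cases j <;>
    simp [perpFrame, mul_apply, Fin.sum_univ_four] <;> field_simp <;> rw [hn] <;> ring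

theorem sphCross_vecMul_perpFrame (hn : n ^ 2 = A ^ 2 + B ^ 2 + C ^ 2 + D ^ 2) (hn0 : n ≠ 0)
    (x y : Fin 3 → ℝ) :
    sphCross ![A, B, C, D] (x ᵥ* perpFrame A B C D n) (y ᵥ* perpFrame A B C D n) =
      n • ((x ⨯₃ y) ᵥ* perpFrame A B C D n) := by
  ext i
  fin_cases i <;>
    simp [sphCross, det4, perpFrame, det_succ_row_zero, Fin.sum_univ_succ, Fin.succAbove,
      cross_apply, Pi.single_apply, vecHead, vecTail] <;> field_simp <;> rw [hn] <;> ring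

end PerpFrame

/-- The small circle `γ(s) = R(cos(s/R) ε₁ + sin(s/R) ε₂) + √(1-R²) ε₃` in
`a^⊥ ∩ S³` is a unit-speed conformal trajectory of `V(p) = a - ⟨a,p⟩p` with
`q = -√(1-R²)/(|a| R)`. -/
theorem stmt11 (A B C D R q na : ℝ) (a ε₁ ε₂ ε₃ : Fin 4 → ℝ)
    (ha : a = ![A, B, C, D]) (hane : a ≠ 0)
    (hna : na = Real.sqrt (A ^ 2 + B ^ 2 + C ^ 2 + D ^ 2))
    (hε₁ : ε₁ = na⁻¹ • ![-D, C, -B, A])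
    (hε₂ : ε₂ = na⁻¹ • ![-C, -D, A, B])
    (hε₃ : ε₃ = na⁻¹ • ![-B, A, D, -C])
    (hR1 : 0 < R) (hR2 : R < 1)
    (γ g g' X : ℝ → (Fin 4 → ℝ))
    (hγ : γ = fun s => R • (Real.cos (s / R) • ε₁ + Real.sin (s / R) • ε₂)
      + Real.sqrt (1 - R ^ 2) • ε₃)
    (hd1 : ∀ s, HasDerivAt γ (g s) s)
    (hd2 : ∀ s, HasDerivAt g (g' s) s)
    (hXt : ∀ s, dot4 (X s) (γ s) = 0)
    (hX : ∀ s, ∀ w, dot4 w (γ s) = 0 →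
      dot4 (X s) w = det4 (a - dot4 a (γ s) • γ s) (g s) w (γ s))
    (hq : q = -Real.sqrt (1 - R ^ 2) / (na * R)) :
    (∀ s, dot4 (γ s) (γ s) = 1) ∧ (∀ s, dot4 (g s) (g s) = 1) ∧
    (∀ s, g' s + γ s = q • X s) := by
  have hpos := sum_sq_pos_of_vec4_ne_zero (ha ▸ hane)
  have hn : na ^ 2 = A ^ 2 + B ^ 2 + C ^ 2 + D ^ 2 := hna ▸ Real.sq_sqrt hpos.le
  have hn0 : na ≠ 0 := hna ▸ (Real.sqrt_pos.mpr hpos).ne'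
  have hr : Real.sqrt (1 - R ^ 2) ^ 2 = 1 - R ^ 2 := Real.sq_sqrt (by nlinarith)
  set r := Real.sqrt (1 - R ^ 2)
  set F := perpFrame A B C D na
  have hF : F = of ![ε₁, ε₂, ε₃] := by rw [hε₁, hε₂, hε₃]; rfl
  have hg : g = fun s => -Real.sin (s / R) • ε₁ + Real.cos (s / R) • ε₂ :=
    funext fun s => (hd1 s).unique (hγ ▸ hasDerivAt_smallCircle ε₁ ε₂ ε₃ r s hR1.ne')
  have hγF (s : ℝ) : γ s = ![R * Real.cos (s / R), R * Real.sin (s / R), r] ᵥ* F := by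
    rw [hF, vecMul_of_vec3, hγ]; module
  have hgF (s : ℝ) : g s = ![-Real.sin (s / R), Real.cos (s / R), 0] ᵥ* F := by
    rw [hF, vecMul_of_vec3, hg]; module
  have hg'F (s : ℝ) : g' s = ![-R⁻¹ * Real.cos (s / R), -R⁻¹ * Real.sin (s / R), 0] ᵥ* F := by
    rw [hF, vecMul_of_vec3, (hd2 s).unique (hg ▸ hasDerivAt_smallCircle_tangent ε₁ ε₂ s)]
    module
  have haγ (s : ℝ) : a ⬝ᵥ γ s = 0 := by
    rw [hγF, ha, dotProduct_comm, ← dotProduct_mulVec, perpFrame_mulVec, dotProduct_zero]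
  have hXs (s : ℝ) : X s = sphCross a (g s) (γ s) := by
    simpa only [dot4_eq_dotProduct, haγ, zero_smul, sub_zero] using
      eq_sphCross_of_dotProduct_eq (hXt s) (hX s)
  have hdot := vecMul_dotProduct_vecMul_of_mul_transpose_eq_one (perpFrame_mul_transpose hn hn0)
  refine ⟨fun s => ?_, fun s => ?_, fun s => ?_⟩
  · rw [dot4_eq_dotProduct, hγF, hdot, smallCircle_coord_dotProduct_self _ hr]
  · rw [dot4_eq_dotProduct, hgF, hdot, smallCircle_tangent_coord_dotProduct_self]
  · rw [hXs, hγF, hgF, hg'F, ha, sphCross_vecMul_perpFrame hn hn0, ← add_vecMul,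
      smallCircle_coord_equation _ hR1.ne' hr, smul_smul, smul_vecMul, hq]
    congr 1
    field_simp
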